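/- arXiv:2008.01379 — 2 statements merged into one kernel-verified Lean document; each statement's English description precedes it below -/
import Mathlib

section
/- Let S be a Γ-graded regular semigroup. Then the map sending each left ideal I of S to I_ε := S_ε ∩ I is a one-to-one, inclusion-preserving correspondence between the left ideals of S and the left ideals of S_ε, with inverse J ↦ SJ; the analogous statement holds for right ideals. -/
open Pointwise

/-- A `Γ`-grading on a semigroup with zero `S`. -/
structure Grading (Γ : Type*) [Group Γ] (S : Type*) [SemigroupWithZero S] where
  deg : S → Γ
  deg_mul : ∀ s t : S, s * t ≠ 0 → deg (s * t) = deg s * deg t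

namespace Grading

variable {Γ : Type*} [Group Γ] {S : Type*} [SemigroupWithZero S]

/-- The component `S_α = φ⁻¹(α) ∪ {0}` of a `Γ`-graded semigroup. -/
def comp (g : Grading Γ S) (α : Γ) : Set S := {s | s = 0 ∨ g.deg s = α}

/-- A left ideal of the subsemigroup `S_ε`: a nonempty subset of `S_ε` closed under
left multiplication by elements of `S_ε`. -/
def IsLeftIdealOfEps (g : Grading Γ S) (J : Set S) : Prop :=
  J ⊆ g.comp 1 ∧ J.Nonempty ∧ ∀ s ∈ g.comp 1, ∀ x ∈ J, s * x ∈ J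

/-- A right ideal of the subsemigroup `S_ε`. -/
def IsRightIdealOfEps (g : Grading Γ S) (J : Set S) : Prop :=
  J ⊆ g.comp 1 ∧ J.Nonempty ∧ ∀ s ∈ g.comp 1, ∀ x ∈ J, x * s ∈ J

end Grading

/-- A left ideal of `S`: a nonempty subset with `SI ⊆ I`. -/
def IsLeftIdeal (S : Type v) [SemigroupWithZero S] (I : Set S) : Prop :=
  I.Nonempty ∧ ∀ s x : S, x ∈ I → s * x ∈ I

/-- A right ideal of `S`: a nonempty subset with `IS ⊆ I`. -/
def IsRightIdeal (S : Type v) [SemigroupWithZero S] (I : Set S) : Prop :=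
  I.Nonempty ∧ ∀ s x : S, x ∈ I → x * s ∈ I

/-!
A regular element `a = a t a` yields the idempotents `t a` and `a t`, and a nonzero idempotent
`e = e e` must have degree `ε`. Hence every `a ∈ I` factors as `a = a · (t a)` with
`t a ∈ S_ε ∩ I`, which gives `S (S_ε ∩ I) = I`. Conversely, if `s x ∈ S_ε` is nonzero with
`x ∈ J ⊆ S_ε`, then `s ∈ S_ε`, so `S_ε ∩ SJ ⊆ S_ε J = J`, while `x = (x t) x ∈ SJ`.
Right ideals are handled symmetrically.
-/

namespace Grading

variable {Γ : Type*} [Group Γ] {S : Type*} [SemigroupWithZero S] (g : Grading Γ S)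

theorem zero_mem_comp (α : Γ) : (0 : S) ∈ g.comp α := Or.inl rfl

theorem mul_mem_comp {s t : S} {α β : Γ} (hs : s ∈ g.comp α) (ht : t ∈ g.comp β) :
    s * t ∈ g.comp (α * β) := by
  by_cases h : s * t = 0
  · exact Or.inl h
  rcases hs with rfl | hs
  · simp at h
  rcases ht with rfl | ht
  · simp at h
  exact Or.inr (by rw [g.deg_mul s t h, hs, ht])

theorem mem_comp_one_left_of_mul {s x : S} (hx : x ∈ g.comp 1) (hsx : s * x ∈ g.comp 1)
    (h : s * x ≠ 0) : s ∈ g.comp 1 := by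
  have hx0 : x ≠ 0 := by rintro rfl; simp at h
  have hd := g.deg_mul s x h
  rw [hsx.resolve_left h, hx.resolve_left hx0, mul_one] at hd
  exact Or.inr hd.symm

theorem mem_comp_one_right_of_mul {s x : S} (hx : x ∈ g.comp 1) (hxs : x * s ∈ g.comp 1)
    (h : x * s ≠ 0) : s ∈ g.comp 1 := by
  have hx0 : x ≠ 0 := by rintro rfl; simp at h
  have hd := g.deg_mul x s h
  rw [hxs.resolve_left h, hx.resolve_left hx0, one_mul] at hd
  exact Or.inr hd.symm

theorem mem_comp_one_of_isIdempotentElem {e : S} (he : IsIdempotentElem e) : e ∈ g.comp 1 := by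
  by_cases h : e = 0
  · exact Or.inl h
  have hd := g.deg_mul e e (by rwa [he.eq])
  rw [he.eq] at hd
  exact Or.inr (mul_eq_left.mp hd.symm)

end Grading

section Regular

variable {S : Type*} [Semigroup S] {a t : S}

theorem isIdempotentElem_mul_of_mul_mul_eq (h : a * t * a = a) : IsIdempotentElem (t * a) := by
  rw [IsIdempotentElem, mul_assoc, ← mul_assoc a, h]

theorem isIdempotentElem_mul_of_mul_mul_eq' (h : a * t * a = a) : IsIdempotentElem (a * t) := by
  rw [IsIdempotentElem, ← mul_assoc, h]

end Regular

section Ideals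

variable {S : Type*} [SemigroupWithZero S] {I J : Set S}

theorem IsLeftIdeal.zero_mem (hI : IsLeftIdeal S I) : (0 : S) ∈ I := by
  obtain ⟨x, hx⟩ := hI.1
  simpa using hI.2 0 x hx

theorem IsRightIdeal.zero_mem (hI : IsRightIdeal S I) : (0 : S) ∈ I := by
  obtain ⟨x, hx⟩ := hI.1
  simpa using hI.2 0 x hx

theorem isLeftIdeal_univ_mul (hJ : J.Nonempty) : IsLeftIdeal S (Set.univ * J) := by
  obtain ⟨x, hx⟩ := hJ
  refine ⟨⟨0 * x, Set.mul_mem_mul (Set.mem_univ 0) hx⟩, fun s a ha => ?_⟩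
  obtain ⟨u, -, y, hy, rfl⟩ := Set.mem_mul.mp ha
  exact Set.mem_mul.mpr ⟨s * u, Set.mem_univ _, y, hy, mul_assoc s u y⟩

theorem isRightIdeal_mul_univ (hJ : J.Nonempty) : IsRightIdeal S (J * Set.univ) := by
  obtain ⟨x, hx⟩ := hJ
  refine ⟨⟨x * 0, Set.mul_mem_mul hx (Set.mem_univ 0)⟩, fun s a ha => ?_⟩
  obtain ⟨y, hy, u, -, rfl⟩ := Set.mem_mul.mp ha
  exact Set.mem_mul.mpr ⟨y, hy, u * s, Set.mem_univ _, (mul_assoc y u s).symm⟩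

end Ideals

namespace Grading

variable {Γ : Type*} [Group Γ] {S : Type*} [SemigroupWithZero S] {g : Grading Γ S}
  {J : Set S}

theorem IsLeftIdealOfEps.zero_mem (hJ : g.IsLeftIdealOfEps J) : (0 : S) ∈ J := by
  obtain ⟨-, ⟨x, hx⟩, hmul⟩ := hJ
  simpa using hmul 0 (g.zero_mem_comp 1) x hx

theorem IsRightIdealOfEps.zero_mem (hJ : g.IsRightIdealOfEps J) : (0 : S) ∈ J := by
  obtain ⟨-, ⟨x, hx⟩, hmul⟩ := hJ
  simpa using hmul 0 (g.zero_mem_comp 1) x hx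

theorem IsLeftIdealOfEps.comp_one_inter_univ_mul (hreg : ∀ s : S, ∃ t : S, s * t * s = s)
    (hJ : g.IsLeftIdealOfEps J) : g.comp 1 ∩ (Set.univ * J) = J := by
  refine subset_antisymm ?_ fun x hx => ⟨hJ.1 hx, ?_⟩
  · rintro a ⟨ha, hmul⟩
    obtain ⟨s, -, x, hx, rfl⟩ := Set.mem_mul.mp hmul
    by_cases h : s * x = 0
    · rw [h]
      exact hJ.zero_mem
    exact hJ.2.2 s (g.mem_comp_one_left_of_mul (hJ.1 hx) ha h) x hx
  obtain ⟨t, ht⟩ := hreg x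
  exact Set.mem_mul.mpr ⟨x * t, Set.mem_univ _, x, hx, ht⟩

theorem IsRightIdealOfEps.comp_one_inter_mul_univ (hreg : ∀ s : S, ∃ t : S, s * t * s = s)
    (hJ : g.IsRightIdealOfEps J) : g.comp 1 ∩ (J * Set.univ) = J := by
  refine subset_antisymm ?_ fun x hx => ⟨hJ.1 hx, ?_⟩
  · rintro a ⟨ha, hmul⟩
    obtain ⟨x, hx, s, -, rfl⟩ := Set.mem_mul.mp hmul
    by_cases h : x * s = 0
    · rw [h]
      exact hJ.zero_mem
    exact hJ.2.2 s (g.mem_comp_one_right_of_mul (hJ.1 hx) ha h) x hx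
  obtain ⟨t, ht⟩ := hreg x
  exact Set.mem_mul.mpr ⟨x, hx, t * x, Set.mem_univ _, by rw [← mul_assoc, ht]⟩

end Grading

section IdealsOfGraded

variable {Γ : Type*} [Group Γ] {S : Type*} [SemigroupWithZero S] (g : Grading Γ S) {I : Set S}

theorem IsLeftIdeal.isLeftIdealOfEps_comp_one_inter (hI : IsLeftIdeal S I) :
    g.IsLeftIdealOfEps (g.comp 1 ∩ I) := by
  refine ⟨Set.inter_subset_left, ⟨0, g.zero_mem_comp 1, hI.zero_mem⟩, ?_⟩
  rintro s hs x ⟨hx, hxI⟩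
  exact ⟨by simpa using g.mul_mem_comp hs hx, hI.2 s x hxI⟩

theorem IsRightIdeal.isRightIdealOfEps_comp_one_inter (hI : IsRightIdeal S I) :
    g.IsRightIdealOfEps (g.comp 1 ∩ I) := by
  refine ⟨Set.inter_subset_left, ⟨0, g.zero_mem_comp 1, hI.zero_mem⟩, ?_⟩
  rintro s hs x ⟨hx, hxI⟩
  exact ⟨by simpa using g.mul_mem_comp hx hs, hI.2 s x hxI⟩

theorem IsLeftIdeal.univ_mul_comp_one_inter (hreg : ∀ s : S, ∃ t : S, s * t * s = s)
    (hI : IsLeftIdeal S I) : Set.univ * (g.comp 1 ∩ I) = I := by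
  refine subset_antisymm (fun a ha => ?_) fun a ha => ?_
  · obtain ⟨u, -, y, ⟨-, hy⟩, rfl⟩ := Set.mem_mul.mp ha
    exact hI.2 u y hy
  obtain ⟨t, ht⟩ := hreg a
  have hε : t * a ∈ g.comp 1 :=
    g.mem_comp_one_of_isIdempotentElem (isIdempotentElem_mul_of_mul_mul_eq ht)
  exact Set.mem_mul.mpr ⟨a, Set.mem_univ _, t * a, ⟨hε, hI.2 t a ha⟩, by rw [← mul_assoc, ht]⟩

theorem IsRightIdeal.comp_one_inter_mul_univ (hreg : ∀ s : S, ∃ t : S, s * t * s = s)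
    (hI : IsRightIdeal S I) : (g.comp 1 ∩ I) * Set.univ = I := by
  refine subset_antisymm (fun a ha => ?_) fun a ha => ?_
  · obtain ⟨y, ⟨-, hy⟩, u, -, rfl⟩ := Set.mem_mul.mp ha
    exact hI.2 u y hy
  obtain ⟨t, ht⟩ := hreg a
  have hε : a * t ∈ g.comp 1 :=
    g.mem_comp_one_of_isIdempotentElem (isIdempotentElem_mul_of_mul_mul_eq' ht)
  exact Set.mem_mul.mpr ⟨a * t, ⟨hε, hI.2 t a ha⟩, a, Set.mem_univ _, ht⟩

end IdealsOfGraded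

/-- For a `Γ`-graded regular semigroup `S`, the map `I ↦ I_ε := S_ε ∩ I` is a one-to-one
inclusion-preserving correspondence between the left (resp. right) ideals of `S` and
those of `S_ε`, with inverse `J ↦ SJ` (resp. `J ↦ JS`). -/
theorem graded_ideal_correspondence {Γ : Type u} [Group Γ] {S : Type v}
    [SemigroupWithZero S] (g : Grading Γ S)
    (hreg : ∀ s : S, ∃ t : S, s * t * s = s) :
    ((∀ I : Set S, IsLeftIdeal S I → g.IsLeftIdealOfEps (g.comp 1 ∩ I)) ∧
     (∀ J : Set S, g.IsLeftIdealOfEps J → IsLeftIdeal S (Set.univ * J)) ∧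
     (∀ I : Set S, IsLeftIdeal S I → Set.univ * (g.comp 1 ∩ I) = I) ∧
     (∀ J : Set S, g.IsLeftIdealOfEps J → g.comp 1 ∩ (Set.univ * J) = J) ∧
     (∀ I I' : Set S, IsLeftIdeal S I → IsLeftIdeal S I' → I ⊆ I' →
        g.comp 1 ∩ I ⊆ g.comp 1 ∩ I')) ∧
    ((∀ I : Set S, IsRightIdeal S I → g.IsRightIdealOfEps (g.comp 1 ∩ I)) ∧
     (∀ J : Set S, g.IsRightIdealOfEps J → IsRightIdeal S (J * Set.univ)) ∧
     (∀ I : Set S, IsRightIdeal S I → (g.comp 1 ∩ I) * Set.univ = I) ∧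
     (∀ J : Set S, g.IsRightIdealOfEps J → g.comp 1 ∩ (J * Set.univ) = J) ∧
     (∀ I I' : Set S, IsRightIdeal S I → IsRightIdeal S I' → I ⊆ I' →
        g.comp 1 ∩ I ⊆ g.comp 1 ∩ I')) :=
  ⟨⟨fun _ hI => hI.isLeftIdealOfEps_comp_one_inter g,
    fun _ hJ => isLeftIdeal_univ_mul hJ.2.1,
    fun _ hI => hI.univ_mul_comp_one_inter g hreg,
    fun _ hJ => hJ.comp_one_inter_univ_mul hreg,
    fun _ _ _ _ => Set.inter_subset_inter_right _⟩,
   ⟨fun _ hI => hI.isRightIdealOfEps_comp_one_inter g,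
    fun _ hJ => isRightIdeal_mul_univ hJ.2.1,
    fun _ hI => hI.comp_one_inter_mul_univ g hreg,
    fun _ hJ => hJ.comp_one_inter_mul_univ hreg,
    fun _ _ _ _ => Set.inter_subset_inter_right _⟩⟩
end

section
/- Let S be a Γ-graded semigroup and let S#Γ be its smash product. Then: (1) S#Γ is a semigroup; (2) E(S#Γ) = {u P_α | u ∈ E(S)∖{0}, α ∈ Γ} ∪ {0}; (3) S has local units if and only if S#Γ has local units; (4) S is an inverse semigroup if and only if S#Γ is an inverse semigroup. -/
/-- `S` has local units. -/
def HasLocalUnits (S : Type*) [SemigroupWithZero S] : Prop :=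
  ∀ s : S, ∃ u v : S, u * u = u ∧ v * v = v ∧ u * s = s ∧ s * v = s

/-- The underlying set of the smash product `S#Γ`: formal symbols `s P_α` for nonzero
`s ∈ S` and `α ∈ Γ`, together with a zero element (`none`). -/
abbrev Smash (Γ : Type u) (S : Type v) [SemigroupWithZero S] : Type max u v :=
  Option ({ s : S // s ≠ 0 } × Γ)

open Classical in
/-- Multiplication in the smash product `S#Γ`:
`(s P_α)(t P_β) = st P_β` if `st ≠ 0` and `t ∈ S_{αβ⁻¹}`, and `0` otherwise. -/
noncomputable def smashMul {Γ : Type u} [Group Γ] {S : Type v} [SemigroupWithZero S]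
    (g : Grading Γ S) (a b : Smash Γ S) : Smash Γ S :=
  a.bind fun p => b.bind fun q =>
    if h : p.1.1 * q.1.1 ≠ 0 ∧ g.deg q.1.1 = p.2 * q.2⁻¹ then
      some (⟨p.1.1 * q.1.1, h.1⟩, q.2)
    else none


/-!
Write `s P_α` for `some (s, α)`. However it is bracketed, a product `(s P_α)(t P_β)(u P_γ)` of
nonzero symbols is `stu P_γ` when `stu ≠ 0`, `φ t = αβ⁻¹` and `φ u = βγ⁻¹`, and `0` otherwise: for
the right bracketing this uses `φ (tu) = φ t φ u`. This gives associativity. A nonzero idempotent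
has degree `1` and a generalized inverse `t` of `s ≠ 0` has degree `(φ s)⁻¹`, so `u P_α` is
idempotent iff `u` is, the inverses of `s P_α` are the `t P_{(φ s) α}` with `t` an inverse of `s`,
and the local units `u`, `v` of `s` give the local units `u P_{(φ s) α}`, `v P_α` of `s P_α`.
-/

namespace Grading

variable {Γ : Type*} [Group Γ] {S : Type*} [SemigroupWithZero S] (g : Grading Γ S)

theorem deg_eq_one_of_mul_self {u : S} (hu : u ≠ 0) (h : u * u = u) : g.deg u = 1 := by
  have := g.deg_mul u u (h.symm ▸ hu)
  rwa [h, left_eq_mul] at this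

theorem deg_eq_inv_of_mul_mul_self {s t : S} (hs : s ≠ 0) (h : s * t * s = s) :
    g.deg t = (g.deg s)⁻¹ := by
  have hsts : s * t * s ≠ 0 := h.symm ▸ hs
  have := g.deg_mul _ _ hsts
  rw [h, g.deg_mul _ _ (left_ne_zero_of_mul hsts), mul_assoc, left_eq_mul] at this
  exact eq_inv_of_mul_eq_one_left this

end Grading

section SmashProduct

variable {Γ : Type u} [Group Γ] {S : Type v} [SemigroupWithZero S] (g : Grading Γ S)

local infixl:70 " ⋆ " => smashMul g

@[simp] theorem smashMul_none_left (b : Smash Γ S) : none ⋆ b = none := rfl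

@[simp] theorem smashMul_none_right (a : Smash Γ S) : a ⋆ none = none := by
  cases a <;> rfl

variable {s t u r : {x : S // x ≠ 0}} {α β γ δ : Γ}

theorem smashMul_some_some_of_ne_zero (hst : s.1 * t.1 ≠ 0) (ht : g.deg t = α * β⁻¹) :
    some (s, α) ⋆ some (t, β) = some (⟨s * t, hst⟩, β) :=
  dif_pos ⟨hst, ht⟩

open Classical in
theorem smashMul_some_some_eq_none (h : ¬(s.1 * t.1 ≠ 0 ∧ g.deg t = α * β⁻¹)) :
    some (s, α) ⋆ some (t, β) = none :=
  dif_neg h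

theorem smashMul_some_some_eq_some_iff :
    some (s, α) ⋆ some (t, β) = some (r, γ) ↔
      s.1 * t.1 = r.1 ∧ g.deg t = α * β⁻¹ ∧ β = γ := by
  simp only [smashMul, Option.bind_some, Option.dite_none_right_eq_some, Option.some.injEq,
    Prod.mk.injEq, Subtype.ext_iff]
  exact ⟨fun ⟨⟨_, ht⟩, hr, hβ⟩ => ⟨hr, ht, hβ⟩, fun ⟨hr, ht, hβ⟩ => ⟨⟨hr ▸ r.2, ht⟩, hr, hβ⟩⟩

theorem smashMul_smashMul_some_eq_some_iff :
    some (s, α) ⋆ some (t, β) ⋆ some (u, γ) = some (r, δ) ↔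
      s.1 * t.1 * u.1 = r.1 ∧ g.deg t = α * β⁻¹ ∧ g.deg u = β * γ⁻¹ ∧ γ = δ := by
  by_cases hst : s.1 * t.1 ≠ 0 ∧ g.deg t = α * β⁻¹
  · rw [smashMul_some_some_of_ne_zero g hst.1 hst.2, smashMul_some_some_eq_some_iff]
    simp [hst.2]
  · rw [smashMul_some_some_eq_none g hst, smashMul_none_left]
    refine iff_of_false (by simp) fun ⟨hr, ht, _⟩ => hst ⟨?_, ht⟩
    exact left_ne_zero_of_mul (hr ▸ r.2)

theorem smashMul_some_smashMul_eq_some_iff :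
    some (s, α) ⋆ (some (t, β) ⋆ some (u, γ)) = some (r, δ) ↔
      s.1 * t.1 * u.1 = r.1 ∧ g.deg t = α * β⁻¹ ∧ g.deg u = β * γ⁻¹ ∧ γ = δ := by
  by_cases htu : t.1 * u.1 ≠ 0 ∧ g.deg u = β * γ⁻¹
  · rw [smashMul_some_some_of_ne_zero g htu.1 htu.2, smashMul_some_some_eq_some_iff]
    have deg_tu : g.deg (t.1 * u.1) = α * γ⁻¹ ↔ g.deg t = α * β⁻¹ := by
      rw [g.deg_mul _ _ htu.1, htu.2, ← mul_assoc, mul_left_inj, eq_mul_inv_iff_mul_eq]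
    simp [mul_assoc, deg_tu, htu.2]
  · rw [smashMul_some_some_eq_none g htu, smashMul_none_right]
    refine iff_of_false (by simp) fun ⟨hr, _, hu, _⟩ => htu ⟨?_, hu⟩
    exact right_ne_zero_of_mul (mul_assoc s.1 _ _ ▸ hr ▸ r.2)

theorem smashMul_assoc (a b c : Smash Γ S) : a ⋆ b ⋆ c = a ⋆ (b ⋆ c) := by
  rcases a with _ | ⟨s, α⟩; · rfl
  rcases b with _ | ⟨t, β⟩; · simp
  rcases c with _ | ⟨u, γ⟩; · simp
  exact Option.ext fun ⟨r, δ⟩ => by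
    rw [smashMul_smashMul_some_eq_some_iff, smashMul_some_smashMul_eq_some_iff]

theorem smashMul_some_self_eq_self_iff :
    some (u, α) ⋆ some (u, α) = some (u, α) ↔ u.1 * u.1 = u.1 := by
  rw [smashMul_some_some_eq_some_iff]
  refine ⟨And.left, fun h => ⟨h, ?_, rfl⟩⟩
  rw [g.deg_eq_one_of_mul_self u.2 h, mul_inv_cancel]

theorem smashMul_self_eq_self_iff (a : Smash Γ S) :
    a ⋆ a = a ↔ a = none ∨ ∃ (u : S) (hu : u ≠ 0) (α : Γ), u * u = u ∧ a = some (⟨u, hu⟩, α) := by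
  rcases a with _ | ⟨⟨u, hu⟩, α⟩
  · simp
  · simp [smashMul_some_self_eq_self_iff, hu]

theorem hasLocalUnits_iff_smashMul :
    HasLocalUnits S ↔
      ∀ a : Smash Γ S, ∃ u v : Smash Γ S, u ⋆ u = u ∧ v ⋆ v = v ∧ u ⋆ a = a ∧ a ⋆ v = a := by
  constructor
  · rintro hS (_ | ⟨s, α⟩)
    · exact ⟨none, none, rfl, rfl, rfl, rfl⟩
    obtain ⟨u, v, huu, hvv, hus, hsv⟩ := hS s
    have hu : u ≠ 0 := left_ne_zero_of_mul (hus ▸ s.2)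
    have hv : v ≠ 0 := right_ne_zero_of_mul (hsv ▸ s.2)
    refine ⟨some (⟨u, hu⟩, g.deg s * α), some (⟨v, hv⟩, α), ?_, ?_, ?_, ?_⟩
    · exact (smashMul_some_self_eq_self_iff g).2 huu
    · exact (smashMul_some_self_eq_self_iff g).2 hvv
    · exact (smashMul_some_some_eq_some_iff g).2 ⟨hus, by group, rfl⟩
    · refine (smashMul_some_some_eq_some_iff g).2 ⟨hsv, ?_, rfl⟩
      rw [g.deg_eq_one_of_mul_self hv hvv, mul_inv_cancel]
  · intro h s
    by_cases hs : s = 0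
    · exact ⟨0, 0, by simp [hs]⟩
    obtain ⟨_ | ⟨u, δ⟩, V, huu, hvv, hus, hsv⟩ := h (some (⟨s, hs⟩, 1))
    · simp at hus
    obtain _ | ⟨v, ε⟩ := V
    · simp at hsv
    exact ⟨u, v, (smashMul_some_self_eq_self_iff g).1 huu, (smashMul_some_self_eq_self_iff g).1 hvv,
      ((smashMul_some_some_eq_some_iff g).1 hus).1, ((smashMul_some_some_eq_some_iff g).1 hsv).1⟩

theorem smashMul_some_mutually_inverse_iff :
    (some (s, α) ⋆ some (t, β) ⋆ some (s, α) = some (s, α) ∧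
        some (t, β) ⋆ some (s, α) ⋆ some (t, β) = some (t, β)) ↔
      s.1 * t.1 * s.1 = s.1 ∧ t.1 * s.1 * t.1 = t.1 ∧ β = g.deg s * α := by
  rw [smashMul_smashMul_some_eq_some_iff, smashMul_smashMul_some_eq_some_iff]
  constructor
  · rintro ⟨⟨hsts, -, hs, -⟩, htst, -⟩
    exact ⟨hsts, htst, by rw [hs]; group⟩
  · rintro ⟨hsts, htst, rfl⟩
    have ht := g.deg_eq_inv_of_mul_mul_self s.2 hsts
    exact ⟨⟨hsts, by rw [ht]; group, by group, rfl⟩, htst, by group, by rw [ht]; group, rfl⟩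

theorem existsUnique_inverse_iff_smashMul :
    (∀ s : S, ∃! t : S, s * t * s = s ∧ t * s * t = t) ↔
      ∀ a : Smash Γ S, ∃! b : Smash Γ S, a ⋆ b ⋆ a = a ∧ b ⋆ a ⋆ b = b := by
  constructor
  · rintro hS (_ | ⟨s, α⟩)
    · exact ⟨none, ⟨rfl, rfl⟩, fun b hb => by simpa using hb.2.symm⟩
    obtain ⟨t, ⟨hsts, htst⟩, ht_unique⟩ := hS s
    have ht : t ≠ 0 := right_ne_zero_of_mul (left_ne_zero_of_mul (hsts ▸ s.2))
    refine ⟨some (⟨t, ht⟩, g.deg s * α),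
      (smashMul_some_mutually_inverse_iff g).2 ⟨hsts, htst, rfl⟩, ?_⟩
    rintro (_ | ⟨t', β⟩) hb
    · simp at hb
    obtain ⟨h1, h2, rfl⟩ := (smashMul_some_mutually_inverse_iff g).1 hb
    obtain rfl : t' = ⟨t, ht⟩ := Subtype.ext (ht_unique _ ⟨h1, h2⟩)
    rfl
  · intro h s
    by_cases hs : s = 0
    · subst hs
      exact ⟨0, by simp, fun t ht => by simpa [eq_comm] using ht.2⟩
    obtain ⟨_ | ⟨t, β⟩, hb, hb_unique⟩ := h (some (⟨s, hs⟩, 1))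
    · simp at hb
    obtain ⟨hsts, htst, rfl⟩ := (smashMul_some_mutually_inverse_iff g).1 hb
    refine ⟨t, ⟨hsts, htst⟩, fun t' ⟨h1, h2⟩ => ?_⟩
    have ht' : t' ≠ 0 := right_ne_zero_of_mul (left_ne_zero_of_mul (h1 ▸ hs))
    have := hb_unique (some (⟨t', ht'⟩, g.deg s * 1))
      ((smashMul_some_mutually_inverse_iff g).2 ⟨h1, h2, rfl⟩)
    simpa [Subtype.ext_iff] using this

end SmashProduct

/-- Lemma `hgyfhyfhf1` on the smash product `S#Γ` of a `Γ`-graded semigroup `S`: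
(1) `S#Γ` is a semigroup (multiplication is associative);
(2) `E(S#Γ) = {u P_α | u ∈ E(S) \ {0}, α ∈ Γ} ∪ {0}`;
(3) `S` has local units iff `S#Γ` has local units;
(4) `S` is an inverse semigroup iff `S#Γ` is an inverse semigroup. -/
theorem smash_product_props {Γ : Type u} [Group Γ] {S : Type v} [SemigroupWithZero S]
    (g : Grading Γ S) :
    (∀ a b c : Smash Γ S, smashMul g (smashMul g a b) c = smashMul g a (smashMul g b c)) ∧
    (∀ a : Smash Γ S, smashMul g a a = a ↔
      (a = none ∨ ∃ (u : S) (hu : u ≠ 0) (α : Γ), u * u = u ∧ a = some (⟨u, hu⟩, α))) ∧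
    (HasLocalUnits S ↔
      ∀ a : Smash Γ S, ∃ u v : Smash Γ S,
        smashMul g u u = u ∧ smashMul g v v = v ∧
        smashMul g u a = a ∧ smashMul g a v = a) ∧
    ((∀ s : S, ∃! t : S, s * t * s = s ∧ t * s * t = t) ↔
      (∀ a : Smash Γ S, ∃! b : Smash Γ S,
        smashMul g (smashMul g a b) a = a ∧ smashMul g (smashMul g b a) b = b)) :=
  ⟨smashMul_assoc g, smashMul_self_eq_self_iff g, hasLocalUnits_iff_smashMul g,
    existsUnique_inverse_iff_smashMul g⟩
end
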